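/- Let E ≥ 6, m ≥ 2 be integers and c = (c₁,...,c_m) be Lüroth digits (each ≥ 2). If b = (b₁,...,b_{m-1}, e) has all entries in [2,E], with 3 ≤ e ≤ E-1 and |c_m - e| ≥ 2, then the distance between the fundamental intervals I_m(c) and I_m(b) is at least E^{-2m}. -/

import Mathlib

/-- The first Lüroth digit of `x`: the unique integer `a ≥ 2` with
`1/a < x ≤ 1/(a-1)` (for `x ∈ (0,1]`). -/
noncomputable def lurothDigit (x : ℝ) : ℕ := ⌊1 / x⌋₊ + 1

/-- The Lüroth map on `[0,1]`. -/
noncomputable def lurothMap (x : ℝ) : ℝ :=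
  if x = 0 then 0
  else (lurothDigit x : ℝ) * ((lurothDigit x : ℝ) - 1) * x - ((lurothDigit x : ℝ) - 1)

/-- The Lüroth digit sequence of `x` (0-indexed: `lurothDigitSeq x n = a_{n+1}(x)`). -/
noncomputable def lurothDigitSeq (x : ℝ) (n : ℕ) : ℕ := lurothDigit (lurothMap^[n] x)

/-- The `n`-th term of the Lüroth series associated with the digit sequence `a`. -/
noncomputable def lurothTerm (a : ℕ → ℕ) (n : ℕ) : ℝ :=
  (∏ j ∈ Finset.range n, (1 : ℝ) / ((a j : ℝ) * ((a j : ℝ) - 1))) * (1 / (a n : ℝ))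

/-- The value of the Lüroth series with digit sequence `a`. -/
noncomputable def lurothVal (a : ℕ → ℕ) : ℝ := ∑' n, lurothTerm a n

/-- The finite Lüroth sum `⟨c₁, …, cₙ⟩`. -/
noncomputable def lurothFinSum (c : ℕ → ℕ) (n : ℕ) : ℝ := ∑ k ∈ Finset.range n, lurothTerm c k

/-- The fundamental interval of level `n` with digits `c`. -/
noncomputable def fundamentalInterval (n : ℕ) (c : ℕ → ℕ) : Set ℝ :=
  {x | x ∈ Set.Ioc (0 : ℝ) 1 ∧ ∀ j < n, lurothDigitSeq x j = c j}

/-!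
Peel off leading digits with the Lüroth map as long as those of the two points agree: on the
cylinder `(1 / d, 1 / (d - 1)]` of a digit `d ≤ E` the map is affine with slope
`d (d - 1) ≤ E ^ 2`, so each common digit costs a factor `E ^ 2`. Once the leading digits differ
the two points lie in disjoint cylinders. If that digit is the last one, the digits differ by at
least two, so a whole cylinder of length at least `E ^ (-2)` separates the points. Otherwise the
point of `I_m(b)` keeps away from the endpoint of its cylinder facing the other point: from the
left endpoint because its next digit is at most `E`, from the right one because its last digit
`e ≥ 3` keeps all its images away from `1`.
-/

open Set

lemma two_le_lurothDigit {x : ℝ} (hx : x ∈ Ioc 0 1) : (2 : ℝ) ≤ lurothDigit x := by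
  have := (Nat.one_le_floor_iff (1 / x)).2 (one_le_one_div hx.1 hx.2)
  exact_mod_cast (by unfold lurothDigit; omega : 2 ≤ lurothDigit x)

lemma one_div_lurothDigit_lt {x : ℝ} (hx : 0 < x) : 1 / (lurothDigit x : ℝ) < x := by
  rw [lurothDigit, Nat.cast_add_one, one_div_lt (by positivity) hx]
  exact Nat.lt_floor_add_one _

lemma le_one_div_lurothDigit_sub_one {x : ℝ} (hx : x ∈ Ioc 0 1) :
    x ≤ 1 / ((lurothDigit x : ℝ) - 1) := by
  have h1 : (1 : ℝ) ≤ ⌊1 / x⌋₊ := by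
    exact_mod_cast (Nat.one_le_floor_iff _).2 (one_le_one_div hx.1 hx.2)
  rw [lurothDigit, Nat.cast_add_one, add_sub_cancel_right, le_one_div hx.1 (by linarith)]
  exact Nat.floor_le (by positivity [hx.1])

lemma one_div_sub_one_eq_one_div_add {d : ℝ} (h0 : d ≠ 0) (h1 : d - 1 ≠ 0) :
    1 / (d - 1) = 1 / d + 1 / (d * (d - 1)) := by
  field_simp
  ring

lemma one_div_lurothDigit_add_lurothMap_div_eq {x : ℝ} (hx : x ∈ Ioc 0 1) :
    1 / (lurothDigit x : ℝ) + lurothMap x / ((lurothDigit x : ℝ) * ((lurothDigit x : ℝ) - 1))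
      = x := by
  have h2 : (2 : ℝ) ≤ lurothDigit x := two_le_lurothDigit hx
  have h0 : (lurothDigit x : ℝ) ≠ 0 := by linarith
  have h1 : (lurothDigit x : ℝ) - 1 ≠ 0 := by linarith
  rw [lurothMap, if_neg hx.1.ne']
  field_simp
  ring

lemma lurothMap_mem_Ioc {x : ℝ} (hx : x ∈ Ioc 0 1) : lurothMap x ∈ Ioc 0 1 := by
  have h2 : (2 : ℝ) ≤ lurothDigit x := two_le_lurothDigit hx
  set d : ℝ := (lurothDigit x : ℝ)
  have hw : 0 < d * (d - 1) := by nlinarith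
  have heq := one_div_lurothDigit_add_lurothMap_div_eq hx
  have hlen := one_div_sub_one_eq_one_div_add (d := d) (by linarith) (by linarith)
  have hlo := one_div_lurothDigit_lt hx.1
  have hhi := le_one_div_lurothDigit_sub_one hx
  constructor
  · exact (div_pos_iff_of_pos_right hw).1 (by linarith)
  · exact (div_le_div_iff_of_pos_right hw).1 (by linarith)

lemma mem_fundamentalInterval_succ {n : ℕ} {c : ℕ → ℕ} {x : ℝ} :
    x ∈ fundamentalInterval (n + 1) c ↔
      x ∈ Ioc 0 1 ∧ lurothDigit x = c 0 ∧
        lurothMap x ∈ fundamentalInterval n (fun j => c (j + 1)) := by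
  have hshift (j : ℕ) : lurothDigitSeq x (j + 1) = lurothDigitSeq (lurothMap x) j := by
    rw [lurothDigitSeq, lurothDigitSeq, Function.iterate_succ_apply]
  constructor
  · rintro ⟨hx, hd⟩
    exact ⟨hx, hd 0 n.succ_pos, lurothMap_mem_Ioc hx,
      fun j hj => (hshift j).symm.trans (hd (j + 1) (by omega))⟩
  · rintro ⟨hx, h0, -, hd⟩
    refine ⟨hx, fun j hj => ?_⟩
    cases j with
    | zero => exact h0
    | succ j => exact (hshift j).trans (hd j (by omega))

lemma lurothMap_div_le_sub {x t : ℝ} (hx : x ∈ Ioc 0 1) (ht : t ≤ 1 / (lurothDigit x : ℝ)) :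
    lurothMap x / ((lurothDigit x : ℝ) * ((lurothDigit x : ℝ) - 1)) ≤ x - t := by
  linarith [one_div_lurothDigit_add_lurothMap_div_eq hx]

lemma one_sub_lurothMap_div_le_sub {x t : ℝ} (hx : x ∈ Ioc 0 1)
    (ht : 1 / ((lurothDigit x : ℝ) - 1) ≤ t) :
    (1 - lurothMap x) / ((lurothDigit x : ℝ) * ((lurothDigit x : ℝ) - 1)) ≤ t - x := by
  have h2 : (2 : ℝ) ≤ lurothDigit x := two_le_lurothDigit hx
  rw [one_div_sub_one_eq_one_div_add (by linarith) (by linarith)] at ht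
  linarith [one_div_lurothDigit_add_lurothMap_div_eq hx, sub_div 1 (lurothMap x)
    ((lurothDigit x : ℝ) * ((lurothDigit x : ℝ) - 1))]

lemma one_div_sq_le_one_div_mul {a b E : ℝ} (ha : 0 < a) (hb : 0 < b) (haE : a ≤ E)
    (hbE : b ≤ E) : 1 / E ^ 2 ≤ 1 / (a * b) :=
  one_div_le_one_div_of_le (mul_pos ha hb) (by nlinarith)

lemma one_div_sq_le_sub_of_lurothDigit_add_two_le {x x' E : ℝ} (hx : x ∈ Ioc 0 1)
    (hx' : x' ∈ Ioc 0 1) (h : lurothDigit x + 2 ≤ lurothDigit x')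
    (hE : (lurothDigit x : ℝ) + 1 ≤ E) : 1 / E ^ 2 ≤ x - x' := by
  have h2 : (2 : ℝ) ≤ lurothDigit x := two_le_lurothDigit hx
  have h' : (lurothDigit x : ℝ) + 1 ≤ (lurothDigit x' : ℝ) - 1 := by
    have : ((lurothDigit x + 2 : ℕ) : ℝ) ≤ lurothDigit x' := by exact_mod_cast h
    push_cast at this
    linarith
  have hgap : 1 / ((lurothDigit x : ℝ) * ((lurothDigit x : ℝ) + 1))
      = 1 / (lurothDigit x : ℝ) - 1 / ((lurothDigit x : ℝ) + 1) := by
    field_simp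
    ring
  calc 1 / E ^ 2 ≤ 1 / ((lurothDigit x : ℝ) * ((lurothDigit x : ℝ) + 1)) :=
        one_div_sq_le_one_div_mul (by linarith) (by linarith) (by linarith) hE
    _ ≤ x - x' := by
        linarith [one_div_lurothDigit_lt hx.1, le_one_div_lurothDigit_sub_one hx',
          one_div_le_one_div_of_le (by linarith) h']

lemma lurothMap_div_le_sub_of_lurothDigit_lt {x x' : ℝ} (hx : x ∈ Ioc 0 1)
    (hx' : x' ∈ Ioc 0 1) (h : lurothDigit x < lurothDigit x') :
    lurothMap x / ((lurothDigit x : ℝ) * ((lurothDigit x : ℝ) - 1)) ≤ x - x' := by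
  have h' : (lurothDigit x : ℝ) ≤ (lurothDigit x' : ℝ) - 1 := by
    have : ((lurothDigit x + 1 : ℕ) : ℝ) ≤ lurothDigit x' := by exact_mod_cast h
    push_cast at this
    linarith
  have h2 : (2 : ℝ) ≤ lurothDigit x := two_le_lurothDigit hx
  exact lurothMap_div_le_sub hx
    ((le_one_div_lurothDigit_sub_one hx').trans (one_div_le_one_div_of_le (by linarith) h'))

lemma one_sub_lurothMap_div_le_sub_of_lt_lurothDigit {x x' : ℝ} (hx : x ∈ Ioc 0 1)
    (hx' : x' ∈ Ioc 0 1) (h : lurothDigit x' < lurothDigit x) :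
    (1 - lurothMap x) / ((lurothDigit x : ℝ) * ((lurothDigit x : ℝ) - 1)) ≤ x' - x := by
  have h' : (lurothDigit x' : ℝ) ≤ (lurothDigit x : ℝ) - 1 := by
    have : ((lurothDigit x' + 1 : ℕ) : ℝ) ≤ lurothDigit x := by exact_mod_cast h
    push_cast at this
    linarith
  have h2 : (2 : ℝ) ≤ lurothDigit x' := two_le_lurothDigit hx'
  exact one_sub_lurothMap_div_le_sub hx
    ((one_div_le_one_div_of_le (by linarith) h').trans (one_div_lurothDigit_lt hx'.1).le)

lemma abs_sub_eq_of_lurothDigit_eq {x x' : ℝ} (hx : x ∈ Ioc 0 1) (hx' : x' ∈ Ioc 0 1)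
    (h : lurothDigit x = lurothDigit x') :
    |x - x'| =
      |lurothMap x - lurothMap x'| / ((lurothDigit x : ℝ) * ((lurothDigit x : ℝ) - 1)) := by
  have h2 : (2 : ℝ) ≤ lurothDigit x := two_le_lurothDigit hx
  have hw : 0 < (lurothDigit x : ℝ) * ((lurothDigit x : ℝ) - 1) := by nlinarith
  have hx_eq := one_div_lurothDigit_add_lurothMap_div_eq hx
  have hx'_eq := one_div_lurothDigit_add_lurothMap_div_eq hx'
  rw [← h] at hx'_eq
  rw [← abs_of_pos hw, ← abs_div, sub_div]
  congr 1
  linarith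

lemma one_div_sq_le_one_div_lurothDigit_mul {x E : ℝ} (hx : x ∈ Ioc 0 1)
    (hE : (lurothDigit x : ℝ) ≤ E) :
    1 / E ^ 2 ≤ 1 / ((lurothDigit x : ℝ) * ((lurothDigit x : ℝ) - 1)) := by
  have h2 : (2 : ℝ) ≤ lurothDigit x := two_le_lurothDigit hx
  exact one_div_sq_le_one_div_mul (by linarith) (by linarith) hE (by linarith)

lemma one_div_pow_le_one_sub (E n : ℕ) (d : ℕ → ℕ) (hd : ∀ j ≤ n, d j ≤ E) (hlast : 3 ≤ d n)
    {x : ℝ} (hx : x ∈ fundamentalInterval (n + 1) d) :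
    1 / (E : ℝ) ^ (2 * (n + 1)) ≤ 1 - x := by
  induction n generalizing d x with
  | zero =>
    obtain ⟨hx, hdx, -⟩ := mem_fundamentalInterval_succ.1 hx
    have h3 : (3 : ℝ) ≤ d 0 := by exact_mod_cast hlast
    have hE : (3 : ℝ) ≤ E := h3.trans (by exact_mod_cast hd 0 le_rfl)
    have hx2 : x ≤ 1 / 2 := by
      have := le_one_div_lurothDigit_sub_one hx
      rw [hdx] at this
      exact this.trans (one_div_le_one_div_of_le (by norm_num) (by linarith))
    have hE2 : 1 / (E : ℝ) ^ 2 ≤ 1 / 2 := one_div_le_one_div_of_le (by norm_num) (by nlinarith)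
    simpa using (by linarith : 1 / (E : ℝ) ^ 2 ≤ 1 - x)
  | succ n ih =>
    obtain ⟨hx, hdx, hTx⟩ := mem_fundamentalInterval_succ.1 hx
    have h2 : (2 : ℝ) ≤ lurothDigit x := two_le_lurothDigit hx
    have hw := one_div_sq_le_one_div_lurothDigit_mul (E := E) hx
      (by rw [hdx]; exact_mod_cast hd 0 (by omega))
    have hT := ih (fun j => d (j + 1)) (fun j hj => hd (j + 1) (by omega)) hlast hTx
    calc 1 / (E : ℝ) ^ (2 * (n + 1 + 1))
          = 1 / (E : ℝ) ^ 2 * (1 / (E : ℝ) ^ (2 * (n + 1))) := by ring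
      _ ≤ 1 / ((lurothDigit x : ℝ) * ((lurothDigit x : ℝ) - 1)) * (1 - lurothMap x) :=
          mul_le_mul hw hT (by positivity) ((by positivity : (0 : ℝ) ≤ 1 / E ^ 2).trans hw)
      _ = (1 - lurothMap x) / ((lurothDigit x : ℝ) * ((lurothDigit x : ℝ) - 1)) := by ring
      _ ≤ 1 - x := one_sub_lurothMap_div_le_sub hx ((div_le_one (by linarith)).2 (by linarith))

theorem one_div_pow_le_abs_sub_of_mem_fundamentalInterval (E n : ℕ) (c b : ℕ → ℕ)
    (hb : ∀ j ≤ n, b j ≤ E) (hlast : 3 ≤ b n) (hlastE : b n + 1 ≤ E)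
    (hsep : 2 ≤ |(c n : ℤ) - (b n : ℤ)|) {y z : ℝ}
    (hy : y ∈ fundamentalInterval (n + 1) c) (hz : z ∈ fundamentalInterval (n + 1) b) :
    1 / (E : ℝ) ^ (2 * (n + 1)) ≤ |y - z| := by
  induction n generalizing c b y z with
  | zero =>
    obtain ⟨hy, hdy, -⟩ := mem_fundamentalInterval_succ.1 hy
    obtain ⟨hz, hdz, -⟩ := mem_fundamentalInterval_succ.1 hz
    show 1 / (E : ℝ) ^ 2 ≤ |y - z|
    rcases le_abs'.1 hsep with hcb | hbc
    · refine (one_div_sq_le_sub_of_lurothDigit_add_two_le hy hz (by omega) ?_).trans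
        (le_abs_self _)
      exact_mod_cast (by omega : lurothDigit y + 1 ≤ E)
    · rw [abs_sub_comm]
      refine (one_div_sq_le_sub_of_lurothDigit_add_two_le hz hy (by omega) ?_).trans
        (le_abs_self _)
      exact_mod_cast (by omega : lurothDigit z + 1 ≤ E)
  | succ n ih =>
    obtain ⟨hy, hdy, hTy⟩ := mem_fundamentalInterval_succ.1 hy
    obtain ⟨hz, hdz, hTz⟩ := mem_fundamentalInterval_succ.1 hz
    have hw := one_div_sq_le_one_div_lurothDigit_mul (E := E) hz
      (by rw [hdz]; exact_mod_cast hb 0 (by omega))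
    suffices ∃ s, 1 / (E : ℝ) ^ (2 * (n + 1)) ≤ s ∧
        s / ((lurothDigit z : ℝ) * ((lurothDigit z : ℝ) - 1)) ≤ |y - z| by
      obtain ⟨s, hs, hsyz⟩ := this
      calc 1 / (E : ℝ) ^ (2 * (n + 1 + 1))
          = 1 / (E : ℝ) ^ 2 * (1 / (E : ℝ) ^ (2 * (n + 1))) := by ring
        _ ≤ 1 / ((lurothDigit z : ℝ) * ((lurothDigit z : ℝ) - 1)) * s :=
          mul_le_mul hw hs (by positivity) ((by positivity : (0 : ℝ) ≤ 1 / E ^ 2).trans hw)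
        _ = s / ((lurothDigit z : ℝ) * ((lurothDigit z : ℝ) - 1)) := by ring
        _ ≤ |y - z| := hsyz
    rcases lt_trichotomy (c 0) (b 0) with hcb | hcb | hcb
    · refine ⟨1 - lurothMap z, one_div_pow_le_one_sub E n (fun j => b (j + 1))
        (fun j hj => hb (j + 1) (by omega)) hlast hTz, ?_⟩
      exact (one_sub_lurothMap_div_le_sub_of_lt_lurothDigit hz hy (by omega)).trans
        (le_abs_self _)
    · refine ⟨|lurothMap y - lurothMap z|, ih (fun j => c (j + 1)) (fun j => b (j + 1))
        (fun j hj => hb (j + 1) (by omega)) hlast hlastE hsep hTy hTz, ?_⟩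
      rw [abs_sub_eq_of_lurothDigit_eq hy hz (by omega), hdy, hdz, hcb]
    · obtain ⟨hTz, hdTz, -⟩ := mem_fundamentalInterval_succ.1 hTz
      have h2 : (2 : ℝ) ≤ lurothDigit (lurothMap z) := two_le_lurothDigit hTz
      have hdE : (lurothDigit (lurothMap z) : ℝ) ≤ E := by
        rw [hdTz]; exact_mod_cast hb 1 (by omega)
      have hE : (1 : ℝ) ≤ E := by linarith
      have hTz1 : 1 / (E : ℝ) < lurothMap z :=
        (one_div_le_one_div_of_le (by linarith) hdE).trans_lt (one_div_lurothDigit_lt hTz.1)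
      refine ⟨lurothMap z, ?_, ?_⟩
      · calc 1 / (E : ℝ) ^ (2 * (n + 1)) ≤ 1 / (E : ℝ) ^ 1 :=
            one_div_pow_le_one_div_pow_of_le hE (by omega)
          _ ≤ lurothMap z := by rw [pow_one]; exact hTz1.le
      · exact (lurothMap_div_le_sub_of_lurothDigit_lt hz hy (by omega)).trans
          (neg_sub y z ▸ neg_le_abs _)

theorem fundamentalInterval_separation_general (E m : ℕ) (hm : 2 ≤ m)
    (c b : ℕ → ℕ)
    (hb : ∀ j < m, 2 ≤ b j ∧ b j ≤ E)
    (he1 : 3 ≤ b (m - 1)) (he2 : b (m - 1) ≤ E - 1)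
    (he3 : 2 ≤ |(c (m - 1) : ℤ) - (b (m - 1) : ℤ)|) :
    ∀ y ∈ fundamentalInterval m c, ∀ z ∈ fundamentalInterval m b,
      1 / (E : ℝ) ^ (2 * m) ≤ |y - z| := by
  obtain ⟨n, rfl⟩ : ∃ n, m = n + 1 := ⟨m - 1, by omega⟩
  rw [Nat.add_sub_cancel] at he1 he2 he3
  intro y hy z hz
  exact one_div_pow_le_abs_sub_of_mem_fundamentalInterval E n c b
    (fun j hj => (hb j (by omega)).2) he1 (by omega) he3 hy hz

/-- Separation of fundamental intervals: under the stated digit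
conditions, the distance between `I_m(c)` and `I_m(b)` is at least `E^{-2m}`. -/
theorem fundamentalInterval_separation (E m : ℕ) (hE : 6 ≤ E) (hm : 2 ≤ m)
    (c b : ℕ → ℕ) (hc : ∀ j < m, 2 ≤ c j)
    (hb : ∀ j < m, 2 ≤ b j ∧ b j ≤ E)
    (he1 : 3 ≤ b (m - 1)) (he2 : b (m - 1) ≤ E - 1)
    (he3 : 2 ≤ |(c (m - 1) : ℤ) - (b (m - 1) : ℤ)|) :
    ∀ y ∈ fundamentalInterval m c, ∀ z ∈ fundamentalInterval m b,
      1 / (E : ℝ) ^ (2 * m) ≤ |y - z| :=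
  fundamentalInterval_separation_general E m hm c b hb he1 he2 he3
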